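/- Let ρ be a pure 4-qubit state that is a product across the 2-versus-2 bipartition {j,l}|{m,s}, i.e. (up to the corresponding reordering of tensor factors) ρ = |χ_{jl}⟩⟨χ_{jl}| ⊗ |χ_{ms}⟩⟨χ_{ms}| with χ_{jl}, χ_{ms} ∈ ℂ² ⊗ ℂ² unit vectors. Then the matching {j,l}-matricization of the full correlation tensor T_{i₁i₂i₃i₄} = tr(ρ (σ_{i₁} ⊗ σ_{i₂} ⊗ σ_{i₃} ⊗ σ_{i₄})) satisfies ‖T_{\underline{\{j,l\}}}‖_k ≤ 3 for every k ∈ {1,…,9}. -/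

import Mathlib

open Matrix BigOperators ComplexOrder

noncomputable section

/-- The three standard Pauli matrices. -/
def pauli : Fin 3 → Matrix (Fin 2) (Fin 2) ℂ :=
  ![!![0, 1; 1, 0], !![0, -Complex.I; Complex.I, 0], !![1, 0; 0, -1]]

/-- The tensor (Kronecker) product of `n` local operators, acting on
`(ℂ²)^{⊗n}` with the Hilbert space indexed by functions `Fin n → Fin 2`. -/
def tensorOp {n : ℕ} (A : Fin n → Matrix (Fin 2) (Fin 2) ℂ) :
    Matrix (Fin n → Fin 2) (Fin n → Fin 2) ℂ :=
  fun r c => ∏ j, A j (r j) (c j)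

/-- The full correlation tensor of an `n`-qubit state:
`T_{i₁⋯i_n} = tr(ρ (σ_{i₁} ⊗ ⋯ ⊗ σ_{i_n}))`. -/
def corr {n : ℕ} (ρ : Matrix (Fin n → Fin 2) (Fin n → Fin 2) ℂ)
    (f : Fin n → Fin 3) : ℝ :=
  ((ρ * tensorOp fun j => pauli (f j)).trace).re

/-- The `A`-matricization of an `n`-index tensor `v`: the real matrix whose row
index collects the indices in `A` and whose column index collects the remaining
indices. -/
def matricize {n m : ℕ} (A : Finset (Fin n)) (v : (Fin n → Fin m) → ℝ) :
    Matrix ({j // j ∈ A} → Fin m) ({j // j ∉ A} → Fin m) ℝ :=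
  fun r c => v fun j => if h : j ∈ A then r ⟨j, h⟩ else c ⟨j, h⟩

/-- The singular values of a real matrix `M`: the square roots of the
eigenvalues of `MᵀM = MᴴM`. -/
def singVals {I J : Type*} [Fintype I] [Fintype J] [DecidableEq J]
    (M : Matrix I J ℝ) : J → ℝ :=
  fun j => Real.sqrt ((Matrix.posSemidef_conjTranspose_mul_self M).1.eigenvalues j)

/-- The Ky Fan `k` norm: the maximum, over sets of `k` of the singular values,
of their sum — equivalently, the sum of the `k` largest singular values. -/
def kyFanNorm {I J : Type*} [Fintype I] [Fintype J] [DecidableEq J]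
    (k : ℕ) (M : Matrix I J ℝ) : ℝ :=
  (Finset.univ : Finset (Finset J)).sup' ⟨∅, Finset.mem_univ ∅⟩
    fun s => if s.card = k then ∑ j ∈ s, singVals M j else 0

/-- The trace norm: the sum of all singular values. -/
def traceNorm {I J : Type*} [Fintype I] [Fintype J] [DecidableEq J]
    (M : Matrix I J ℝ) : ℝ :=
  ∑ j, singVals M j

/-!
Because `Ψ` is a product across `B | Bᶜ`, every Pauli expectation factorizes,
`T_f = t₁ (f|_B) * t₂ (f|_Bᶜ)`, so the `B`-matricization is the rank-one matrix `t₁ t₂ᵀ`.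
Its only nonzero singular value is `‖t₁‖ ‖t₂‖`, which therefore bounds every Ky Fan norm.
For a normalized pure state on `n` qubits the completeness of the Pauli basis gives
`∑_g ⟨σ_g⟩² = 2ⁿ` over all `4ⁿ` Pauli strings; the identity string contributes `1`, so for
two qubits `‖tᵢ‖² ≤ 3`.
-/

section SingularValues

variable {I J : Type*} [Fintype I] [Fintype J] [DecidableEq J]

lemma singVals_nonneg (M : Matrix I J ℝ) (j : J) : 0 ≤ singVals M j :=
  Real.sqrt_nonneg _

lemma kyFanNorm_le_traceNorm (k : ℕ) (M : Matrix I J ℝ) : kyFanNorm k M ≤ traceNorm M := by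
  refine Finset.sup'_le _ _ fun s _ => ?_
  split_ifs
  · exact Finset.sum_le_sum_of_subset_of_nonneg (Finset.subset_univ s)
      fun j _ _ => singVals_nonneg M j
  · exact Finset.sum_nonneg fun j _ => singVals_nonneg M j

omit [DecidableEq J] in
lemma sum_sqrt_eq_sqrt_sum_of_card_ne_zero_le_one {μ : J → ℝ}
    (h : Fintype.card {j // μ j ≠ 0} ≤ 1) : ∑ j, √(μ j) = √(∑ j, μ j) := by
  classical
  rw [Fintype.card_subtype] at h
  cases isEmpty_or_nonempty J
  · simp
  obtain ⟨j₀, hj₀⟩ := Finset.card_le_one_iff_subset_singleton.mp h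
  have hμ₀ : ∀ j ≠ j₀, μ j = 0 := fun j hj => by
    by_contra hne
    exact hj (Finset.mem_singleton.mp (hj₀ (by simpa using hne)))
  rw [Fintype.sum_eq_single j₀ fun j hj => by rw [hμ₀ j hj, Real.sqrt_zero],
    Fintype.sum_eq_single j₀ hμ₀]

lemma traceNorm_eq_sqrt_trace_of_rank_le_one {M : Matrix I J ℝ} (hM : M.rank ≤ 1) :
    traceNorm M = √((Mᴴ * M).trace) := by
  have hA := Matrix.posSemidef_conjTranspose_mul_self M
  rw [traceNorm, hA.1.trace_eq_sum_eigenvalues]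
  refine sum_sqrt_eq_sqrt_sum_of_card_ne_zero_le_one ?_
  rwa [← hA.1.rank_eq_card_non_zero_eigs, Matrix.rank_conjTranspose_mul_self]

lemma traceNorm_vecMulVec (u : I → ℝ) (v : J → ℝ) :
    traceNorm (Matrix.vecMulVec u v) = √(∑ i, u i ^ 2) * √(∑ j, v j ^ 2) := by
  rw [traceNorm_eq_sqrt_trace_of_rank_le_one (Matrix.rank_vecMulVec_le u v), ← Real.sqrt_mul
    (Finset.sum_nonneg fun i _ => sq_nonneg (u i)), Matrix.conjTranspose_vecMulVec,
    Matrix.vecMulVec_mul, Matrix.trace_vecMulVec]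
  simp only [dotProduct, Matrix.vecMul, Matrix.vecMulVec_apply, star_trivial, Finset.sum_mul,
    Finset.mul_sum]
  congr 1
  exact Finset.sum_congr rfl fun _ _ => Finset.sum_congr rfl fun _ _ => by ring

end SingularValues

def pauliBasis : Fin 4 → Matrix (Fin 2) (Fin 2) ℂ := Fin.cons 1 pauli

lemma pauliBasis_isHermitian (i : Fin 4) : (pauliBasis i).IsHermitian := by
  fin_cases i <;> ext a b <;> fin_cases a <;> fin_cases b <;> simp [pauliBasis, pauli]

lemma sum_pauliBasis_mul_pauliBasis (a b c d : Fin 2) :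
    ∑ i, pauliBasis i a b * pauliBasis i c d = if a = d ∧ b = c then 2 else 0 := by
  fin_cases a <;> fin_cases b <;> fin_cases c <;> fin_cases d <;>
    simp [Fin.sum_univ_four, pauliBasis, pauli] <;> ring_nf

section PauliString

variable {ι : Type*} [Fintype ι]

def pauliString (g : ι → Fin 4) : Matrix (ι → Fin 2) (ι → Fin 2) ℂ :=
  fun r c => ∏ i, pauliBasis (g i) (r i) (c i)

lemma pauliString_isHermitian (g : ι → Fin 4) : (pauliString g).IsHermitian := by
  ext r c
  simp only [Matrix.conjTranspose_apply, pauliString, star_prod]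
  exact Finset.prod_congr rfl fun i _ => (pauliBasis_isHermitian (g i)).apply (r i) (c i)

lemma pauliString_zero [DecidableEq ι] : pauliString (0 : ι → Fin 4) = 1 := by
  ext r c
  simp [pauliString, pauliBasis, Matrix.one_apply, Finset.prod_ite_zero, funext_iff]

lemma sum_pauliString_mul_pauliString [DecidableEq ι] (r c r' c' : ι → Fin 2) :
    ∑ g, pauliString g r c * pauliString g c' r' =
      if r = r' ∧ c = c' then 2 ^ Fintype.card ι else 0 := by
  simp only [pauliString, ← Finset.prod_mul_distrib]
  rw [← Fintype.prod_sum fun i k => pauliBasis k (r i) (c i) * pauliBasis k (c' i) (r' i)]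
  simp only [sum_pauliBasis_mul_pauliBasis, Fintype.prod_ite_zero, funext_iff, ← forall_and]
  simp

end PauliString

section PauliExpect

variable {ι : Type*} [Fintype ι] [DecidableEq ι]

def pauliExpect (ψ : (ι → Fin 2) → ℂ) (g : ι → Fin 4) : ℂ :=
  star ψ ⬝ᵥ pauliString g *ᵥ ψ

lemma pauliExpect_eq_sum (ψ : (ι → Fin 2) → ℂ) (g : ι → Fin 4) :
    pauliExpect ψ g = ∑ r, ∑ c, star (ψ r) * pauliString g r c * ψ c := by
  simp only [pauliExpect, dotProduct, Matrix.mulVec, Finset.mul_sum, Pi.star_apply, mul_assoc]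

lemma pauliExpect_im (ψ : (ι → Fin 2) → ℂ) (g : ι → Fin 4) : (pauliExpect ψ g).im = 0 :=
  (pauliString_isHermitian g).im_star_dotProduct_mulVec_self ψ

lemma pauliExpect_zero (ψ : (ι → Fin 2) → ℂ) :
    pauliExpect ψ 0 = ∑ r, Complex.normSq (ψ r) := by
  simp [pauliExpect, pauliString_zero, dotProduct, Complex.mul_conj', mul_comm,
    Complex.normSq_eq_norm_sq]

lemma pauliExpect_mul_self (ψ : (ι → Fin 2) → ℂ) (g : ι → Fin 4) :
    pauliExpect ψ g * pauliExpect ψ g = ∑ r, ∑ c', ∑ c, ∑ r',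
      star (ψ r) * ψ c * star (ψ c') * ψ r' * (pauliString g r c * pauliString g c' r') := by
  rw [pauliExpect_eq_sum, Finset.sum_mul_sum]
  simp_rw [Finset.sum_mul_sum]
  exact Finset.sum_congr rfl fun _ _ => Finset.sum_congr rfl fun _ _ =>
    Finset.sum_congr rfl fun _ _ => Finset.sum_congr rfl fun _ _ => by ring

lemma sum_normSq_pauliExpect (ψ : (ι → Fin 2) → ℂ) :
    ∑ g, Complex.normSq (pauliExpect ψ g) =
      2 ^ Fintype.card ι * (∑ r, Complex.normSq (ψ r)) ^ 2 := by
  have hself : ∀ g, (Complex.normSq (pauliExpect ψ g) : ℂ) = pauliExpect ψ g * pauliExpect ψ g :=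
    fun g => by rw [← Complex.mul_conj, Complex.conj_eq_iff_im.mpr (pauliExpect_im ψ g)]
  apply Complex.ofReal_injective
  push_cast
  simp only [hself, pauliExpect_mul_self, Complex.normSq_eq_conj_mul_self]
  have hswap : ∀ f : (ι → Fin 4) → (ι → Fin 2) → (ι → Fin 2) → (ι → Fin 2) → (ι → Fin 2) → ℂ,
      ∑ g, ∑ r, ∑ c', ∑ c, ∑ r', f g r c' c r' = ∑ r, ∑ c', ∑ c, ∑ r', ∑ g, f g r c' c r' := by
    intro f
    rw [Finset.sum_comm]; refine Finset.sum_congr rfl fun r _ => ?_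
    rw [Finset.sum_comm]; refine Finset.sum_congr rfl fun c' _ => ?_
    rw [Finset.sum_comm]; refine Finset.sum_congr rfl fun c _ => ?_
    rw [Finset.sum_comm]
  rw [hswap]
  -- Pauli completeness collapses the sum over `g` to the terms with `r = r'` and `c = c'`.
  simp only [← Finset.mul_sum, sum_pauliString_mul_pauliString]
  simp only [ite_and, mul_ite, mul_zero, Finset.sum_ite_eq, Finset.sum_ite_eq', Finset.mem_univ,
    if_true]
  rw [sq, Finset.sum_mul_sum, Finset.mul_sum]
  exact Finset.sum_congr rfl fun _ _ => by
    rw [Finset.mul_sum]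
    exact Finset.sum_congr rfl fun _ _ => by simp only [Complex.star_def]; ring

lemma sum_sq_pauliExpect_succ_le [Nonempty ι] {ψ : (ι → Fin 2) → ℂ}
    (hψ : ∑ r, Complex.normSq (ψ r) = 1) :
    ∑ f : ι → Fin 3, (pauliExpect ψ (Fin.succ ∘ f)).re ^ 2 ≤ 2 ^ Fintype.card ι - 1 := by
  have hsq : ∀ g, (pauliExpect ψ g).re ^ 2 = Complex.normSq (pauliExpect ψ g) := fun g => by
    rw [Complex.normSq_apply, pauliExpect_im, mul_zero, add_zero, sq]
  have hinj : Function.Injective (Fin.succ ∘ · : (ι → Fin 3) → ι → Fin 4) :=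
    (Fin.succ_injective 3).comp_left
  have hzero : (0 : ι → Fin 4) ∉ Finset.univ.image (Fin.succ ∘ ·) := by
    simp [funext_iff, Fin.succ_ne_zero]
  have htotal := sum_normSq_pauliExpect ψ
  rw [hψ, one_pow, mul_one] at htotal
  have hid : Complex.normSq (pauliExpect ψ 0) = 1 := by
    rw [pauliExpect_zero, hψ, Complex.ofReal_one, Complex.normSq_one]
  calc ∑ f : ι → Fin 3, (pauliExpect ψ (Fin.succ ∘ f)).re ^ 2
      = ∑ g ∈ insert 0 (Finset.univ.image (Fin.succ ∘ ·)),
          Complex.normSq (pauliExpect ψ g) - 1 := by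
        rw [Finset.sum_insert hzero, Finset.sum_image fun f _ f' _ h => hinj h, hid]
        simp [hsq]
    _ ≤ 2 ^ Fintype.card ι - 1 := by
        rw [← htotal]
        gcongr
        · exact fun g _ _ => Complex.normSq_nonneg _
        · exact Finset.subset_univ _

end PauliExpect

section ProductState

variable {ι : Type*} [Fintype ι] [DecidableEq ι] (s : Finset ι)

lemma pauliString_eq_mul_subtype (g : ι → Fin 4) (r c : ι → Fin 2) :
    pauliString g r c =
      pauliString (fun i : {i // i ∈ s} => g i) (fun i => r i) (fun i => c i) *
        pauliString (fun i : {i // i ∉ s} => g i) (fun i => r i) (fun i => c i) := by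
  unfold pauliString
  convert (Fintype.prod_subtype_mul_prod_subtype (· ∈ s) fun i =>
    pauliBasis (g i) (r i) (c i)).symm

lemma pauliExpect_of_eq_mul {χ₁ : ({i // i ∈ s} → Fin 2) → ℂ}
    {χ₂ : ({i // i ∉ s} → Fin 2) → ℂ} {Ψ : (ι → Fin 2) → ℂ}
    (hΨ : ∀ r, Ψ r = χ₁ (fun i => r i) * χ₂ (fun i => r i)) (g : ι → Fin 4) :
    pauliExpect Ψ g = pauliExpect χ₁ (fun i => g i) * pauliExpect χ₂ (fun i => g i) := by
  let e := Equiv.piEquivPiSubtypeProd (· ∈ s) fun _ => Fin 2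
  let term₁ (a b : {i // i ∈ s} → Fin 2) :=
    star (χ₁ a) * pauliString (fun i : {i // i ∈ s} => g i) a b * χ₁ b
  let term₂ (a b : {i // i ∉ s} → Fin 2) :=
    star (χ₂ a) * pauliString (fun i : {i // i ∉ s} => g i) a b * χ₂ b
  let term (a b : ({i // i ∈ s} → Fin 2) × ({i // i ∉ s} → Fin 2)) :=
    term₁ a.1 b.1 * term₂ a.2 b.2
  have hterm : ∀ r c, star (Ψ r) * pauliString g r c * Ψ c = term (e r) (e c) := by
    intro r c
    simp only [hΨ, pauliString_eq_mul_subtype s g r c, star_mul', term, term₁, term₂, e,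
      Equiv.piEquivPiSubtypeProd_apply]
    ring
  calc pauliExpect Ψ g = ∑ r, ∑ c, term (e r) (e c) := by
        simp only [pauliExpect_eq_sum, hterm]
    _ = ∑ r, ∑ b, term (e r) b := Finset.sum_congr rfl fun r _ => e.sum_comp (term (e r))
    _ = ∑ a, ∑ b, term a b := e.sum_comp fun a => ∑ b, term a b
    _ = _ := by
        simp only [pauliExpect_eq_sum, Finset.sum_mul_sum, Fintype.sum_prod_type]
        rfl

end ProductState

lemma corr_vecMulVec_star {n : ℕ} (Ψ : (Fin n → Fin 2) → ℂ) (F : Fin n → Fin 3) :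
    corr (Matrix.vecMulVec Ψ (star Ψ)) F = (pauliExpect Ψ (Fin.succ ∘ F)).re := by
  rw [corr, Matrix.vecMulVec_mul, Matrix.trace_vecMulVec, dotProduct_comm, ← dotProduct_mulVec]
  -- `tensorOp (pauli ∘ F)` is `pauliString (Fin.succ ∘ F)` by unfolding `Fin.cons`.
  rfl

lemma sum_sq_pauliExpect_succ_le_three {ι : Type*} [Fintype ι] [DecidableEq ι]
    (hι : Fintype.card ι = 2) {ψ : (ι → Fin 2) → ℂ} (hψ : ∑ r, Complex.normSq (ψ r) = 1) :
    ∑ f : ι → Fin 3, (pauliExpect ψ (Fin.succ ∘ f)).re ^ 2 ≤ 3 := by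
  have : Nonempty ι := Fintype.card_pos_iff.mp (by omega)
  calc _ ≤ (2 : ℝ) ^ Fintype.card ι - 1 := sum_sq_pauliExpect_succ_le hψ
    _ = 3 := by rw [hι]; norm_num

/-- If a pure 4-qubit state is a product across the 2-versus-2
bipartition `B | Bᶜ` (up to reordering of factors), then the matching
`B`-matricization of the full correlation tensor satisfies `‖T_{B̲}‖_k ≤ 3`
for every `k ∈ {1,…,9}`. -/
theorem matching_two_vs_two_product_four_qubit_matricization_bound
    (B : Finset (Fin 4)) (hB : B.card = 2)
    (χ₁ : ({i // i ∈ B} → Fin 2) → ℂ) (χ₂ : ({i // i ∉ B} → Fin 2) → ℂ)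
    (hχ₁ : ∑ x, Complex.normSq (χ₁ x) = 1)
    (hχ₂ : ∑ x, Complex.normSq (χ₂ x) = 1)
    (Ψ : (Fin 4 → Fin 2) → ℂ)
    (hprod : ∀ r, Ψ r = χ₁ (fun i => r i.1) * χ₂ (fun i => r i.1))
    (ρ : Matrix (Fin 4 → Fin 2) (Fin 4 → Fin 2) ℂ)
    (hρ : ρ = Matrix.vecMulVec Ψ (star Ψ)) :
    ∀ k : ℕ, 1 ≤ k → k ≤ 9 →
      kyFanNorm k (matricize B (corr ρ)) ≤ 3 := by
  intro k _ _
  let t₁ (f : {i // i ∈ B} → Fin 3) := (pauliExpect χ₁ (Fin.succ ∘ f)).re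
  let t₂ (f : {i // i ∉ B} → Fin 3) := (pauliExpect χ₂ (Fin.succ ∘ f)).re
  have hmat : matricize B (corr ρ) = Matrix.vecMulVec t₁ t₂ := by
    ext r c
    rw [Matrix.vecMulVec_apply, matricize, hρ, corr_vecMulVec_star, pauliExpect_of_eq_mul B hprod,
      Complex.mul_re, pauliExpect_im, pauliExpect_im, mul_zero, sub_zero]
    simp [Function.comp_def, t₁, t₂, fun i : {j // j ∉ B} => i.2]
  have hcard₁ : Fintype.card {i // i ∈ B} = 2 := by simpa using hB
  have hcard₂ : Fintype.card {i // i ∉ B} = 2 := by simp [Fintype.card_subtype_compl, hB]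
  calc kyFanNorm k (matricize B (corr ρ)) ≤ traceNorm (Matrix.vecMulVec t₁ t₂) :=
        hmat ▸ kyFanNorm_le_traceNorm k _
    _ = √(∑ f, t₁ f ^ 2) * √(∑ f, t₂ f ^ 2) := traceNorm_vecMulVec t₁ t₂
    _ ≤ √3 * √3 := by
        gcongr
        · exact sum_sq_pauliExpect_succ_le_three hcard₁ hχ₁
        · exact sum_sq_pauliExpect_succ_le_three hcard₂ hχ₂
    _ = 3 := Real.mul_self_sqrt (by norm_num)
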